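/- arXiv:2103.00669 — 2 statements merged into one kernel-verified Lean document; each statement's English description precedes it below -/
import Mathlib

section
/- Any self-avoiding path of length ℓ > 4 in the dual graph of the k×k grid contains a set of at least ⌊ℓ/3⌋ pairwise disjoint adjacent vertex pairs of the grid, each pair separated by some edge of the path. -/
/-!
Every dual edge of the path crosses a grid edge, the pair it separates. Colouring grid vertices
by the parity of `x + y` makes these pairs the edges of a bipartite multigraph with `ℓ` edges. A
grid vertex `x` only lies on pairs crossed by the four dual edges around `x`, and a self-avoiding
path of length `ℓ > 4` has at most three edges inside a set of four vertices, so the multigraph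
has maximum degree 3. By Hall's theorem with deficiency, a bipartite multigraph with `m` edges
and maximum degree `n` has a matching with at least `m / n` edges.
-/

/-- Adjacency in the dual square lattice `ℤ × ℤ`. -/
def dualAdj (d d' : ℤ × ℤ) : Prop := |d'.1 - d.1| + |d'.2 - d.2| = 1

/-- The pair of adjacent grid vertices separated by the dual edge from `d` to `d'`
(dual vertex `(a,b)` sits at `(a + 1/2, b + 1/2)`). -/
def sepPair (d d' : ℤ × ℤ) : (ℤ × ℤ) × (ℤ × ℤ) :=
  if d'.1 = d.1 + 1 then ((d.1 + 1, d.2), (d.1 + 1, d.2 + 1))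
  else if d'.1 = d.1 - 1 then ((d.1, d.2), (d.1, d.2 + 1))
  else if d'.2 = d.2 + 1 then ((d.1, d.2 + 1), (d.1 + 1, d.2 + 1))
  else ((d.1, d.2), (d.1 + 1, d.2))

/-- A vertex of the `k × k` grid `{0,…,k−1}²`. -/
def inGrid (k : ℕ) (u : ℤ × ℤ) : Prop :=
  0 ≤ u.1 ∧ u.1 < (k : ℤ) ∧ 0 ≤ u.2 ∧ u.2 < (k : ℤ)

/-- A self-avoiding path or circuit of length `ℓ` in the dual lattice of the `k × k` grid:
consecutive dual vertices are adjacent, every dual edge separates a pair of grid vertices of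
`G_k`, and vertices are distinct except that the endpoints may coincide (circuit). -/
def IsDualPathStar (k ℓ : ℕ) (v : Fin (ℓ + 1) → ℤ × ℤ) : Prop :=
  (∀ i : Fin ℓ, dualAdj (v i.castSucc) (v i.succ)) ∧
  (∀ i : Fin ℓ, inGrid k (sepPair (v i.castSucc) (v i.succ)).1 ∧
    inGrid k (sepPair (v i.castSucc) (v i.succ)).2) ∧
  (∀ i j : Fin (ℓ + 1), i < j → v i = v j → i = 0 ∧ j = Fin.last ℓ)

open Finset

-- Add `d` new elements to every `t x` and apply Hall's theorem.
theorem exists_injective_of_card_le_biUnion_card_add {ι α : Type*} [Fintype ι] [DecidableEq α]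
    (t : ι → Finset α) (d : ℕ) (h : ∀ s : Finset ι, #s ≤ #(s.biUnion t) + d) :
    ∃ s : Finset ι, Fintype.card ι ≤ #s + d ∧
      ∃ f : s → α, Function.Injective f ∧ ∀ x : s, f x ∈ t x := by
  classical
  have hall (s : Finset ι) : #s ≤ #(s.biUnion fun x => (t x).disjSum (univ : Finset (Fin d))) := by
    rcases s.eq_empty_or_nonempty with rfl | hs
    · simp
    have hunion : s.biUnion (fun x => (t x).disjSum univ) =
        (s.biUnion t).disjSum (univ : Finset (Fin d)) := by
      ext (a | c)
      · simp
      · simpa using hs.exists_mem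
    rw [hunion, card_disjSum, card_univ, Fintype.card_fin]
    exact h s
  obtain ⟨f, hf, hft⟩ := (all_card_le_biUnion_card_iff_exists_injective _).1 hall
  have hright : #{x | ¬(f x).isLeft} ≤ d := by
    refine (card_le_card_of_injOn f (t := univ.map .inr) (fun x hx => ?_) hf.injOn).trans
      (by simp)
    obtain ⟨c, hc⟩ := Sum.isRight_iff.1 (Sum.not_isLeft.1 (mem_filter.1 hx).2)
    simp [hc]
  refine ⟨({x | (f x).isLeft} : Finset ι), ?_, fun x => (f x).getLeft (mem_filter.1 x.2).2, ?_,
    fun x => ?_⟩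
  · have := card_filter_add_card_filter_not (s := univ) fun x => (f x).isLeft
    rw [card_univ] at this
    omega
  · intro x y hxy
    apply Subtype.ext
    apply hf
    rw [← Sum.inl_getLeft (f x) (mem_filter.1 x.2).2, ← Sum.inl_getLeft (f y) (mem_filter.1 y.2).2]
    exact congrArg Sum.inl hxy
  · rw [← inl_mem_disjSum (t := (univ : Finset (Fin d))), Sum.inl_getLeft]
    exact hft x

theorem exists_matching_of_degree_le {ι α β : Type*} [Fintype ι] [Fintype α] [DecidableEq α]
    [DecidableEq β] (a : ι → α) (b : ι → β) (n : ℕ) (ha : ∀ x, #{i | a i = x} ≤ n)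
    (hb : ∀ y, #{i | b i = y} ≤ n) :
    ∃ S : Finset ι, Fintype.card ι ≤ n * #S ∧ Set.InjOn a S ∧ Set.InjOn b S := by
  let N (x : α) : Finset β := image b {i | a i = x}
  have hcount (s : Finset α) : Fintype.card ι ≤ n * (#(s.biUnion N) + (Fintype.card α - #s)) :=
    calc Fintype.card ι = #{i | a i ∈ s} + #{i | a i ∉ s} :=
          (card_filter_add_card_filter_not _).symm
      _ ≤ n * #(s.biUnion N) + n * #sᶜ := by
          gcongr
          · refine card_le_mul_card_image_of_maps_to (f := b) (fun i hi => ?_) n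
              fun y _ => (card_le_card (monotone_filter_left _ (filter_subset _ _))).trans (hb y)
            exact mem_biUnion.2 ⟨a i, (mem_filter.1 hi).2, mem_image_of_mem b (by simp)⟩
          · refine card_le_mul_card_image_of_maps_to (f := a) (fun i hi => by simpa using hi) n
              fun x _ => (card_le_card (monotone_filter_left _ (filter_subset _ _))).trans (ha x)
      _ = _ := by rw [card_compl, mul_add]
  have hα : Fintype.card ι ≤ n * Fintype.card α :=
    card_le_mul_card_image_of_maps_to (fun i _ => mem_univ (a i)) n fun x _ => ha x
  have hex : ∃ r, Fintype.card ι ≤ n * r := ⟨_, hα⟩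
  -- `Nat.find hex = ⌈card ι / n⌉`; Hall's condition holds with deficiency `card α - ⌈card ι / n⌉`.
  obtain ⟨s, hs, f, hf, hfN⟩ := exists_injective_of_card_le_biUnion_card_add N
    (Fintype.card α - Nat.find hex) fun s => by
      have := Nat.find_min' hex (hcount s)
      have := card_le_univ s
      omega
  choose e hea heb using fun x : s => by simpa [N] using hfN x
  have he : Function.Injective e := fun x y hxy => Subtype.ext (by rw [← hea x, ← hea y, hxy])
  refine ⟨univ.map ⟨e, he⟩, ?_, ?_, ?_⟩
  · calc Fintype.card ι ≤ n * Nat.find hex := Nat.find_spec hex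
      _ ≤ n * #(univ.map ⟨e, he⟩) := by
        rw [card_map, card_univ, Fintype.card_coe]
        have := Nat.find_min' hex hα
        gcongr
        omega
  all_goals
    rw [coe_map, coe_univ, Set.image_univ]
    rintro _ ⟨x, rfl⟩ _ ⟨y, rfl⟩ hxy
  · simp only [Function.Embedding.coeFn_mk, hea] at hxy ⊢
    rw [Subtype.ext hxy]
  · simp only [Function.Embedding.coeFn_mk, heb] at hxy ⊢
    rw [hf hxy]

theorem exists_matching_of_two_coloring {ι γ : Type*} [Fintype ι] [DecidableEq γ]
    (p : ι → γ × γ) (c : γ → Prop) (hc : ∀ i, c (p i).1 ↔ ¬c (p i).2) (n : ℕ)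
    (hdeg : ∀ x, #{i | x = (p i).1 ∨ x = (p i).2} ≤ n) :
    ∃ S : Finset ι, Fintype.card ι ≤ n * #S ∧ ∀ i ∈ S, ∀ j ∈ S, i ≠ j →
      ∀ x ∈ ({(p i).1, (p i).2} : Set γ), x ∉ ({(p j).1, (p j).2} : Set γ) := by
  classical
  let a (i : ι) : γ := if c (p i).1 then (p i).1 else (p i).2
  let b (i : ι) : γ := if c (p i).1 then (p i).2 else (p i).1
  have hab (i : ι) (x : γ) :
      x ∈ ({(p i).1, (p i).2} : Set γ) ↔ c x ∧ x = a i ∨ ¬c x ∧ x = b i := by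
    have := hc i
    by_cases h : c (p i).1 <;>
      simp only [a, b, h, if_true, if_false, Set.mem_insert_iff, Set.mem_singleton_iff] <;> grind
  have hfiber (f : ι → γ) (hf : ∀ i, f i ∈ ({(p i).1, (p i).2} : Set γ)) (x : γ) :
      #{i | f i = x} ≤ n :=
    (card_le_card (monotone_filter_right _ fun i _ h => by rw [← h]; simpa using hf i)).trans
      (hdeg x)
  have ha_mem (i : ι) : a i ∈ ({(p i).1, (p i).2} : Set γ) := by simp only [a]; split_ifs <;> simp
  have hb_mem (i : ι) : b i ∈ ({(p i).1, (p i).2} : Set γ) := by simp only [b]; split_ifs <;> simp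
  obtain ⟨S, hS, haS, hbS⟩ := exists_matching_of_degree_le (Set.rangeFactorization a) b n
    (fun x => by simpa [Set.rangeFactorization, Subtype.ext_iff] using hfiber a ha_mem x)
    (hfiber b hb_mem)
  refine ⟨S, hS, fun i hi j hj hij x hxi hxj => ?_⟩
  rw [hab] at hxi hxj
  rcases hxi with ⟨hx, rfl⟩ | ⟨hx, rfl⟩
  · exact hij (haS hi hj (Subtype.ext (hxj.resolve_right (by tauto)).2))
  · exact hij (hbS hi hj (hxj.resolve_left (by tauto)).2)

def IsSelfAvoidingStar {α : Type*} {ℓ : ℕ} (v : Fin (ℓ + 1) → α) : Prop :=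
  ∀ i j : Fin (ℓ + 1), i < j → v i = v j → i = 0 ∧ j = Fin.last ℓ

namespace IsSelfAvoidingStar

variable {α : Type*} {ℓ : ℕ} {v : Fin (ℓ + 1) → α}

theorem injOn (hv : IsSelfAvoidingStar v) {s : Set (Fin (ℓ + 1))}
    (hs : 0 ∉ s ∨ Fin.last ℓ ∉ s) : Set.InjOn v s := by
  intro x hx y hy hxy
  rcases lt_trichotomy x y with h | h | h
  · obtain ⟨rfl, rfl⟩ := hv x y h hxy
    tauto
  · exact h
  · obtain ⟨rfl, rfl⟩ := hv y x h hxy.symm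
    tauto

-- If `#C ≤ #S`, injectivity forces the start indices of the edges in `S` to be all their vertex
-- indices but `ℓ`, and the end indices all but `0`; comparing index sums gives `#S ∈ {0, ℓ}`.
theorem card_le_card_sub_one_of_edges_mem [DecidableEq α] (hv : IsSelfAvoidingStar v) {C : Finset α}
    (hC : #C < ℓ) {S : Finset (Fin ℓ)} (hS : ∀ i ∈ S, v i.castSucc ∈ C ∧ v i.succ ∈ C) :
    #S ≤ #C - 1 := by
  by_contra! hlt
  let T := S.map Fin.castSuccEmb
  let T' := S.map (Fin.succEmb ℓ)
  let U := T ∪ T'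
  have hUC : ∀ x ∈ U, v x ∈ C := by
    simp only [U, T, T', mem_union, mem_map]
    rintro _ (⟨i, hi, rfl⟩ | ⟨i, hi, rfl⟩)
    exacts [(hS i hi).1, (hS i hi).2]
  have hU (z : Fin (ℓ + 1)) (hz : z = 0 ∨ z = Fin.last ℓ) : #(U.erase z) ≤ #C := by
    refine card_le_card_of_injOn v (fun x hx => hUC x (mem_of_mem_erase hx)) (hv.injOn ?_)
    rcases hz with rfl | rfl <;> simp
  have hT : T = U.erase (Fin.last ℓ) := by
    refine eq_of_subset_of_card_le (fun x hx => mem_erase.2 ⟨?_, mem_union_left _ hx⟩) ?_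
    · obtain ⟨i, -, rfl⟩ := mem_map.1 hx
      exact Fin.castSucc_ne_last i
    · have := hU _ (.inr rfl)
      rw [card_map]
      omega
  have hT' : T' = U.erase 0 := by
    refine eq_of_subset_of_card_le (fun x hx => mem_erase.2 ⟨?_, mem_union_right _ hx⟩) ?_
    · obtain ⟨i, -, rfl⟩ := mem_map.1 hx
      exact Fin.succ_ne_zero i
    · have := hU _ (.inl rfl)
      rw [card_map]
      omega
  have hsum : ∑ x ∈ T', (x : ℕ) = ∑ x ∈ T, (x : ℕ) + #S := by
    simp [T, T', sum_add_distrib]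
  rw [hT', sum_erase U (f := Fin.val) (a := 0) rfl, hT] at hsum
  have hSC : #S ≤ #C := by simpa [← hT, T] using hU _ (.inr rfl)
  by_cases hl : Fin.last ℓ ∈ U
  · rw [← sum_erase_add _ _ hl, Fin.val_last] at hsum
    omega
  · rw [erase_eq_of_notMem hl] at hsum
    omega

end IsSelfAvoidingStar

-- The dual vertices whose unit squares have `p` as a corner.
def facesAt (p : ℤ × ℤ) : Finset (ℤ × ℤ) :=
  {(p.1 - 1, p.2 - 1), (p.1, p.2 - 1), (p.1 - 1, p.2), p}

theorem mem_facesAt_of_dualAdj {d d' x : ℤ × ℤ} (h : dualAdj d d')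
    (hx : x = (sepPair d d').1 ∨ x = (sepPair d d').2) : d ∈ facesAt x ∧ d' ∈ facesAt x := by
  obtain ⟨a, b⟩ := d
  obtain ⟨a', b'⟩ := d'
  obtain ⟨x1, x2⟩ := x
  simp only [dualAdj, Int.abs_eq_natAbs] at h
  simp only [sepPair, facesAt] at hx ⊢
  split_ifs at hx <;> simp only [Prod.ext_iff] at hx <;> simp [Prod.ext_iff] <;> omega

theorem even_sepPair_fst_iff (d d' : ℤ × ℤ) :
    Even ((sepPair d d').1.1 + (sepPair d d').1.2) ↔
      ¬Even ((sepPair d d').2.1 + (sepPair d d').2.2) := by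
  have hsum : (sepPair d d').2.1 + (sepPair d d').2.2 =
      (sepPair d d').1.1 + (sepPair d d').1.2 + 1 := by
    unfold sepPair
    split_ifs <;> ring
  rw [hsum, Int.even_add_one, not_not]

/-- Any self-avoiding path* of length `ℓ > 4` in the dual of the `k × k` grid contains at
least `⌊ℓ/3⌋` pairwise disjoint adjacent vertex pairs, each separated by an edge of the
path. -/
theorem stmt_7 (k ℓ : ℕ) (hℓ : 4 < ℓ) (v : Fin (ℓ + 1) → ℤ × ℤ)
    (hv : IsDualPathStar k ℓ v) :
    ∃ S : Finset (Fin ℓ), ℓ / 3 ≤ S.card ∧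
      ∀ i ∈ S, ∀ j ∈ S, i ≠ j →
        ∀ x ∈ ({(sepPair (v i.castSucc) (v i.succ)).1,
            (sepPair (v i.castSucc) (v i.succ)).2} : Set (ℤ × ℤ)),
          x ∉ ({(sepPair (v j.castSucc) (v j.succ)).1,
            (sepPair (v j.castSucc) (v j.succ)).2} : Set (ℤ × ℤ)) := by
  obtain ⟨hadj, -, hsa⟩ : _ ∧ _ ∧ IsSelfAvoidingStar v := hv
  have hdeg (x : ℤ × ℤ) : #{i : Fin ℓ | x = (sepPair (v i.castSucc) (v i.succ)).1 ∨
      x = (sepPair (v i.castSucc) (v i.succ)).2} ≤ 3 := by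
    have hx : #(facesAt x) ≤ 4 := card_le_four
    refine (hsa.card_le_card_sub_one_of_edges_mem (C := facesAt x) (by omega)
      fun i hi => ?_).trans (by omega)
    exact mem_facesAt_of_dualAdj (hadj i) (mem_filter.1 hi).2
  obtain ⟨S, hS, hdisj⟩ := exists_matching_of_two_coloring
    (fun i : Fin ℓ => sepPair (v i.castSucc) (v i.succ)) (fun x => Even (x.1 + x.2))
    (fun i => even_sepPair_fst_iff _ _) 3 hdeg
  rw [Fintype.card_fin] at hS
  exact ⟨S, by omega, hdisj⟩
end

section
/- In any two-coloring (green/yellow) of the k×k grid graph with at least k²/4 vertices of each color, the number of adjacent green-yellow vertex pairs is at least k/2. -/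
open scoped Classical

/-- Right-or-up adjacency in `{0,…,k−1}²`: counts each unordered nearest-neighbor pair once. -/
def gridAdjRU {k : ℕ} (u w : Fin k × Fin k) : Prop :=
  ((w.1 : ℕ) = (u.1 : ℕ) + 1 ∧ w.2 = u.2) ∨ ((w.2 : ℕ) = (u.2 : ℕ) + 1 ∧ w.1 = u.1)

lemma steps_const {k : ℕ} (f : Fin k → Bool)
    (h : ∀ a b : Fin k, (b : ℕ) = (a : ℕ) + 1 → f a = f b) :
    ∀ a b : Fin k, f a = f b := by
  have key : ∀ n (hn : n < k), f ⟨n, hn⟩ = f ⟨0, Nat.lt_of_le_of_lt (Nat.zero_le n) hn⟩ := by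
    intro n
    induction n with
    | zero => intro hn; rfl
    | succ m ih =>
      intro hn
      have hm : m < k := Nat.lt_of_succ_lt hn
      have h1 := h ⟨m, hm⟩ ⟨m + 1, hn⟩ rfl
      rw [← h1]; exact ih hm
  rintro ⟨a, ha⟩ ⟨b, hb⟩
  rw [key a ha, key b hb]

lemma exists_step {k : ℕ} (f : Fin k → Bool) (h : ∃ a b : Fin k, f a ≠ f b) :
    ∃ a b : Fin k, (b : ℕ) = (a : ℕ) + 1 ∧ f a ≠ f b := by
  by_contra hc
  push_neg at hc
  obtain ⟨a, b, hab⟩ := h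
  exact hab (steps_const f (fun a b hb => hc a b hb) a b)

/-- In any two-coloring of the `k × k` grid with at least `k²/4` vertices of each color, the
number of adjacent differently-colored vertex pairs is at least `k/2`. -/
theorem stmt_10 (k : ℕ) (c : Fin k × Fin k → Bool)
    (hg : (k : ℝ) ^ 2 / 4 ≤ ((Finset.univ.filter (fun v => c v = true)).card : ℝ))
    (hy : (k : ℝ) ^ 2 / 4 ≤ ((Finset.univ.filter (fun v => c v = false)).card : ℝ)) :
    (k : ℝ) / 2 ≤ ((Finset.univ.filter
      (fun p : (Fin k × Fin k) × (Fin k × Fin k) =>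
        gridAdjRU p.1 p.2 ∧ c p.1 ≠ c p.2)).card : ℝ) := by
  set B := Finset.univ.filter
      (fun p : (Fin k × Fin k) × (Fin k × Fin k) =>
        gridAdjRU p.1 p.2 ∧ c p.1 ≠ c p.2) with hBdef
  set R := Finset.univ.filter (fun j : Fin k => ∃ x y : Fin k, c (x, j) ≠ c (y, j)) with hRdef
  set Cm := Finset.univ.filter (fun x : Fin k => ∃ j j' : Fin k, c (x, j) ≠ c (x, j')) with hCdef
  have hRB : R.card ≤ B.card := by
    have hsub : R ⊆ B.image (fun p => p.1.2) := by
      intro j hj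
      rw [hRdef, Finset.mem_filter] at hj
      obtain ⟨-, x, y, hxy⟩ := hj
      obtain ⟨a, b, hab, hdiff⟩ := exists_step (fun x => c (x, j)) ⟨x, y, hxy⟩
      refine Finset.mem_image.2 ⟨((a, j), (b, j)), ?_, rfl⟩
      rw [hBdef, Finset.mem_filter]
      exact ⟨Finset.mem_univ _, Or.inl ⟨hab, rfl⟩, hdiff⟩
    calc R.card ≤ (B.image (fun p => p.1.2)).card := Finset.card_le_card hsub
      _ ≤ B.card := Finset.card_image_le
  have hCB : Cm.card ≤ B.card := by
    have hsub : Cm ⊆ B.image (fun p => p.1.1) := by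
      intro x hx
      rw [hCdef, Finset.mem_filter] at hx
      obtain ⟨-, j, j', hjj⟩ := hx
      obtain ⟨a, b, hab, hdiff⟩ := exists_step (fun j => c (x, j)) ⟨j, j', hjj⟩
      refine Finset.mem_image.2 ⟨((x, a), (x, b)), ?_, rfl⟩
      rw [hBdef, Finset.mem_filter]
      exact ⟨Finset.mem_univ _, Or.inr ⟨hab, rfl⟩, hdiff⟩
    calc Cm.card ≤ (B.image (fun p => p.1.1)).card := Finset.card_le_card hsub
      _ ≤ B.card := Finset.card_image_le
  have hB0 : (0 : ℝ) ≤ (B.card : ℝ) := Nat.cast_nonneg _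
  have hk0 : (0 : ℝ) ≤ (k : ℝ) := Nat.cast_nonneg _
  by_cases hRu : R = Finset.univ
  · have hk : k ≤ B.card := by
      have := hRB
      rw [hRu, Finset.card_univ, Fintype.card_fin] at this
      exact this
    have : (k : ℝ) ≤ (B.card : ℝ) := by exact_mod_cast hk
    linarith
  by_cases hCu : Cm = Finset.univ
  · have hk : k ≤ B.card := by
      have := hCB
      rw [hCu, Finset.card_univ, Fintype.card_fin] at this
      exact this
    have : (k : ℝ) ≤ (B.card : ℝ) := by exact_mod_cast hk
    linarith
  -- there is a monochromatic row j0 and a monochromatic column x0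
  obtain ⟨j0, hj0⟩ : ∃ j0 : Fin k, j0 ∉ R := by
    by_contra h
    push_neg at h
    exact hRu (Finset.eq_univ_iff_forall.2 h)
  obtain ⟨x0, hx0⟩ : ∃ x0 : Fin k, x0 ∉ Cm := by
    by_contra h
    push_neg at h
    exact hCu (Finset.eq_univ_iff_forall.2 h)
  have hj0' : ∀ x y : Fin k, c (x, j0) = c (y, j0) := by
    intro x y; by_contra hne
    exact hj0 (by rw [hRdef, Finset.mem_filter]; exact ⟨Finset.mem_univ _, x, y, hne⟩)
  have hx0' : ∀ j j' : Fin k, c (x0, j) = c (x0, j') := by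
    intro j j'; by_contra hne
    exact hx0 (by rw [hCdef, Finset.mem_filter]; exact ⟨Finset.mem_univ _, j, j', hne⟩)
  have hopp : ∀ v : Fin k × Fin k, c v ≠ c (x0, j0) → v.1 ∈ Cm ∧ v.2 ∈ R := by
    intro v hv
    constructor
    · by_contra hc1
      have hmono : ∀ j j' : Fin k, c (v.1, j) = c (v.1, j') := by
        intro j j'; by_contra hne
        exact hc1 (by rw [hCdef, Finset.mem_filter]; exact ⟨Finset.mem_univ _, j, j', hne⟩)
      apply hv
      calc c v = c (v.1, v.2) := rfl
        _ = c (v.1, j0) := hmono _ _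
        _ = c (x0, j0) := hj0' _ _
    · by_contra hc2
      have hmono : ∀ x y : Fin k, c (x, v.2) = c (y, v.2) := by
        intro x y; by_contra hne
        exact hc2 (by rw [hRdef, Finset.mem_filter]; exact ⟨Finset.mem_univ _, x, y, hne⟩)
      apply hv
      calc c v = c (v.1, v.2) := rfl
        _ = c (x0, v.2) := hmono _ _
        _ = c (x0, j0) := hx0' _ _
  -- the opposite color class fits inside Cm ×ˢ R
  have key : (k : ℝ) ^ 2 / 4 ≤ ((Cm.card * R.card : ℕ) : ℝ) := by
    cases hcase : c (x0, j0) with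
    | true =>
      have hsub : Finset.univ.filter (fun v : Fin k × Fin k => c v = false) ⊆ Cm ×ˢ R := by
        intro v hv
        rw [Finset.mem_filter] at hv
        exact Finset.mem_product.2 (hopp v (by rw [hcase, hv.2]; simp))
      have := (Finset.card_le_card hsub).trans (Finset.card_product Cm R).le
      calc (k : ℝ) ^ 2 / 4 ≤ _ := hy
        _ ≤ ((Cm.card * R.card : ℕ) : ℝ) := by exact_mod_cast this
    | false =>
      have hsub : Finset.univ.filter (fun v : Fin k × Fin k => c v = true) ⊆ Cm ×ˢ R := by
        intro v hv
        rw [Finset.mem_filter] at hv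
        exact Finset.mem_product.2 (hopp v (by rw [hcase, hv.2]; simp))
      have := (Finset.card_le_card hsub).trans (Finset.card_product Cm R).le
      calc (k : ℝ) ^ 2 / 4 ≤ _ := hg
        _ ≤ ((Cm.card * R.card : ℕ) : ℝ) := by exact_mod_cast this
  have hprod : ((Cm.card * R.card : ℕ) : ℝ) ≤ (B.card : ℝ) * (B.card : ℝ) := by
    push_cast
    have h1 : (Cm.card : ℝ) ≤ (B.card : ℝ) := by exact_mod_cast hCB
    have h2 : (R.card : ℝ) ≤ (B.card : ℝ) := by exact_mod_cast hRB
    have hC0 : (0 : ℝ) ≤ (Cm.card : ℝ) := Nat.cast_nonneg _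
    have hR0 : (0 : ℝ) ≤ (R.card : ℝ) := Nat.cast_nonneg _
    nlinarith
  have hsq : (k : ℝ) ^ 2 / 4 ≤ (B.card : ℝ) * (B.card : ℝ) := key.trans hprod
  nlinarith
end
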